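/- arXiv:2106.07772 — 5 statements merged into one kernel-verified Lean document; each statement's English description precedes it below -/
import Mathlib

section
/- Let r ≥ 3 be even and k ≥ 1 odd. Then the (r+k−1)-regular graph on r+k+1 vertices (the complete graph K_{r+k+1} minus a perfect matching) is (K_{1,r}; k)-vertex stable. -/
/-- The star graph `K_{1,r}`: center `none`, leaves `some i`. -/
def starG (r : ℕ) : SimpleGraph (Option (Fin r)) where
  Adj a b := a ≠ b ∧ (a = none ∨ b = none)
  symm := ⟨fun a b h => ⟨h.1.symm, h.2.symm⟩⟩
  loopless := ⟨fun a h => h.1 rfl⟩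

/-- The join `K_{k+1} * \bar K_r`: clique part `Sum.inl`, independent part `Sum.inr`. -/
def joinKE (k r : ℕ) : SimpleGraph (Fin (k + 1) ⊕ Fin r) where
  Adj a b := a ≠ b ∧ (a.isLeft ∨ b.isLeft)
  symm := ⟨fun a b h => ⟨h.1.symm, h.2.symm⟩⟩
  loopless := ⟨fun a h => h.1 rfl⟩

/-- The complete graph on `n` vertices minus a perfect matching (vertices `2m`, `2m+1` paired). -/
def compMM (n : ℕ) : SimpleGraph (Fin n) where
  Adj i j := (i : ℕ) / 2 ≠ (j : ℕ) / 2
  symm := ⟨fun i j h => h.symm⟩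
  loopless := ⟨fun i h => h rfl⟩

/-- `G` contains a subgraph isomorphic to `H`. -/
def ContainsIso {α β : Type*} (H : SimpleGraph α) (G : SimpleGraph β) : Prop :=
  ∃ f : α → β, Function.Injective f ∧ ∀ a b, H.Adj a b → G.Adj (f a) (f b)

/-- `G` is `(H; k)`-vertex stable: after deleting any `k` vertices, a copy of `H` remains. -/
def VertexStable {α β : Type*} (H : SimpleGraph α) (k : ℕ) (G : SimpleGraph β) : Prop :=
  ∀ F : Finset β, F.card = k →
    ∃ f : α → β, Function.Injective f ∧ (∀ a, f a ∉ F) ∧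
      ∀ a b, H.Adj a b → G.Adj (f a) (f b)

/-! After deleting `k` vertices, `r + 1` vertices remain, an odd number. The removed perfect
matching splits the vertices into pairs `{2m, 2m+1}`, so some remaining vertex has no partner
among the remaining ones; it is adjacent to the other `r` of them and is the centre of a star
`K_{1,r}`. -/

open Finset

theorem Finset.even_card_of_card_fiber_eq_two {α β : Type*} [DecidableEq β] (f : α → β)
    (s : Finset α) (h : ∀ a ∈ s, #{x ∈ s | f x = f a} = 2) : Even #s := by
  rw [card_eq_sum_card_image f s]
  refine Finset.even_sum _ fun b hb => ?_
  obtain ⟨a, ha, rfl⟩ := mem_image.1 hb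
  rw [h a ha]
  exact even_two

theorem compMM_exists_adj_of_odd_card {n : ℕ} (S : Finset (Fin n)) (hS : Odd #S) :
    ∃ c ∈ S, ∀ l ∈ S, l ≠ c → (compMM n).Adj c l := by
  by_contra! hpartner
  refine Nat.not_even_iff_odd.2 hS <|
    S.even_card_of_card_fiber_eq_two (fun i : Fin n => (i : ℕ) / 2) fun c hc => ?_
  obtain ⟨l, hl, hlc, hpair⟩ := hpartner c hc
  simp only [compMM, ne_eq, not_not] at hpair
  have hlc' : (l : ℕ) ≠ c := Fin.val_ne_of_ne hlc
  refine card_eq_two.2 ⟨c, l, hlc.symm, ?_⟩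
  ext x
  simp only [mem_filter, mem_insert, mem_singleton, Fin.ext_iff]
  constructor
  · rintro ⟨-, hx⟩
    omega
  · rintro (hx | hx) <;> refine ⟨?_, by omega⟩
    · exact Fin.ext hx ▸ hc
    · exact Fin.ext hx ▸ hl

theorem SimpleGraph.exists_starG_embedding_of_forall_adj {β : Type*} [DecidableEq β]
    (G : SimpleGraph β) {r : ℕ} {S : Finset β} (hS : r + 1 ≤ #S) {c : β} (hc : c ∈ S)
    (hadj : ∀ l ∈ S, l ≠ c → G.Adj c l) :
    ∃ f : Option (Fin r) → β, Function.Injective f ∧ (∀ a, f a ∈ S) ∧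
      ∀ a b, (starG r).Adj a b → G.Adj (f a) (f b) := by
  obtain ⟨e⟩ : Nonempty (Fin r ↪ S.erase c) :=
    Function.Embedding.nonempty_of_card_le <| by
      rw [Fintype.card_fin, Fintype.card_coe, card_erase_of_mem hc]
      omega
  have hmem : ∀ i, (e i : β) ∈ S := fun i => mem_of_mem_erase (e i).2
  have hne : ∀ i, (e i : β) ≠ c := fun i => ne_of_mem_erase (e i).2
  refine ⟨fun a => a.elim c fun i => e i, ?_, ?_, ?_⟩
  · rintro (_ | i) (_ | j) h
    · rfl
    · exact absurd h.symm (hne j)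
    · exact absurd h (hne i)
    · exact congrArg some (e.injective (Subtype.ext h))
  · rintro (_ | i)
    exacts [hc, hmem i]
  · rintro (_ | i) (_ | j) ⟨hab, hcentre⟩
    · exact absurd rfl hab
    · exact hadj _ (hmem j) (hne j)
    · exact (hadj _ (hmem i) (hne i)).symm
    · simp at hcentre

theorem stmt_5_general (r k : ℕ) (hre : Even r) :
    VertexStable (starG r) k (compMM (r + k + 1)) := by
  intro F hF
  have hcard : #Fᶜ = r + 1 := by
    rw [card_compl, hF, Fintype.card_fin]
    omega
  obtain ⟨c, hc, hadj⟩ := compMM_exists_adj_of_odd_card Fᶜ (hcard ▸ hre.add_one)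
  obtain ⟨f, hinj, hmem, hstar⟩ :=
    (compMM _).exists_starG_embedding_of_forall_adj hcard.ge hc hadj
  exact ⟨f, hinj, fun a => mem_compl.1 (hmem a), hstar⟩

theorem stmt_5 (r k : ℕ) (hr : 3 ≤ r) (hre : Even r) (hk : 1 ≤ k) (hko : Odd k) :
    VertexStable (starG r) k (compMM (r + k + 1)) :=
  stmt_5_general r k hre
end

section
/- Let r ≥ 3, k ≥ 0, and let G be a graph of order r+k+1 with maximum degree Δ(G) < r+k. If r is odd or k is even, then G is not (K_{1,r}; k)-vertex stable. -/
/-!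
Since `Δ(G) < |V| - 1`, every vertex has a neighbour in the complement `Gᶜ`. In a graph without
isolated vertices, a vertex set inducing no isolated vertex can be enlarged by exactly two vertices
(add an edge leaving it, or two vertices hanging on it), so such sets exist of every even size, and
of every odd size `≥ 3` once a path on three vertices exists, which the handshake lemma provides
when `|V|` is odd. The parity hypothesis thus gives an `(r + 1)`-set `S` inducing no isolated
vertex in `Gᶜ`. Deleting the `k` vertices outside `S` leaves `G[S]`, in which no vertex is adjacent
to all the others, so no `K_{1,r}` survives.
-/

open Finset

namespace SimpleGraph

variable {V : Type*} (H : SimpleGraph V)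

def InducesNoIsolated (S : Finset V) : Prop := ∀ v ∈ S, ∃ w ∈ S, H.Adj v w

variable {H} [DecidableEq V] {S : Finset V} {x w : V}

theorem InducesNoIsolated.insert_of_adj (hS : H.InducesNoIsolated S) (hw : w ∈ S)
    (hxw : H.Adj x w) : H.InducesNoIsolated (insert x S) := by
  intro v hv
  rcases mem_insert.1 hv with rfl | hv
  · exact ⟨w, mem_insert_of_mem hw, hxw⟩
  · obtain ⟨u, hu, hvu⟩ := hS v hv
    exact ⟨u, mem_insert_of_mem hu, hvu⟩

theorem InducesNoIsolated.union {T : Finset V} (hS : H.InducesNoIsolated S)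
    (hT : H.InducesNoIsolated T) : H.InducesNoIsolated (S ∪ T) := by
  intro v hv
  rcases mem_union.1 hv with hv | hv
  · obtain ⟨u, hu, hvu⟩ := hS v hv
    exact ⟨u, mem_union_left T hu, hvu⟩
  · obtain ⟨u, hu, hvu⟩ := hT v hv
    exact ⟨u, mem_union_right S hu, hvu⟩

theorem inducesNoIsolated_pair (hxw : H.Adj x w) : H.InducesNoIsolated {x, w} := by
  intro v hv
  rcases mem_insert.1 hv with rfl | hv
  · exact ⟨w, by simp, hxw⟩
  · rw [mem_singleton.1 hv]
    exact ⟨x, mem_insert_self x {w}, hxw.symm⟩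

variable [Fintype V]

theorem InducesNoIsolated.exists_card_add_two (hS : H.InducesNoIsolated S)
    (hH : ∀ v, ∃ w, H.Adj v w) (hcard : #S + 2 ≤ Fintype.card V) :
    ∃ T, H.InducesNoIsolated T ∧ #T = #S + 2 := by
  have add_edge : ∀ x w, x ∉ S → w ∉ S → H.Adj x w →
      ∃ T, H.InducesNoIsolated T ∧ #T = #S + 2 := fun x w hx hw hxw =>
    ⟨_, (inducesNoIsolated_pair hxw).union hS, by
      rw [card_union_of_disjoint (by simp [hx, hw]), card_pair hxw.ne, add_comm]⟩
  obtain ⟨x, -, hx⟩ := exists_mem_notMem_of_card_lt_card (s := S) (t := univ)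
    (by rw [card_univ]; omega)
  obtain ⟨w, hxw⟩ := hH x
  by_cases hw : w ∈ S
  · have hS₁ := hS.insert_of_adj hw hxw
    obtain ⟨y, -, hy⟩ := exists_mem_notMem_of_card_lt_card (s := insert x S) (t := univ)
      (by rw [card_univ, card_insert_of_notMem hx]; omega)
    obtain ⟨z, hyz⟩ := hH y
    by_cases hz : z ∈ insert x S
    · refine ⟨_, hS₁.insert_of_adj hz hyz, ?_⟩
      rw [card_insert_of_notMem hy, card_insert_of_notMem hx]
    · exact add_edge y z (fun h => hy (mem_insert_of_mem h)) (fun h => hz (mem_insert_of_mem h)) hyz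
  · exact add_edge x w hx hw hxw

theorem InducesNoIsolated.exists_card_add_two_mul (hS : H.InducesNoIsolated S)
    (hH : ∀ v, ∃ w, H.Adj v w) (m : ℕ) (hcard : #S + 2 * m ≤ Fintype.card V) :
    ∃ T, H.InducesNoIsolated T ∧ #T = #S + 2 * m := by
  induction m with
  | zero => exact ⟨S, hS, rfl⟩
  | succ m ih =>
    obtain ⟨T, hT, hTcard⟩ := ih (by omega)
    obtain ⟨T', hT', hT'card⟩ := hT.exists_card_add_two hH (by omega)
    exact ⟨T', hT', by omega⟩

theorem exists_inducesNoIsolated_card_three (hH : ∀ v, ∃ w, H.Adj v w)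
    (hodd : Odd (Fintype.card V)) : ∃ T, H.InducesNoIsolated T ∧ #T = 3 := by
  classical
  obtain ⟨v, hv⟩ : ∃ v, H.degree v ≠ 1 := by
    by_contra! h
    have := H.even_card_odd_degree_vertices
    simp only [h, odd_one, filter_true, card_univ] at this
    exact Nat.not_even_iff_odd.2 hodd this
  have hdeg : 1 < #(H.neighborFinset v) := by
    have := (H.degree_pos_iff_exists_adj v).2 (hH v)
    rw [card_neighborFinset_eq_degree]; omega
  obtain ⟨a, ha, b, hb, hab⟩ := one_lt_card.1 hdeg
  rw [mem_neighborFinset] at ha hb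
  refine ⟨{a, v, b}, (inducesNoIsolated_pair hb).insert_of_adj (mem_insert_self v {b}) ha.symm, ?_⟩
  rw [card_insert_of_notMem (by simp [hab, ha.ne.symm]), card_pair hb.ne]

theorem exists_inducesNoIsolated_card (hH : ∀ v, ∃ w, H.Adj v w) {s : ℕ} (hs : 2 ≤ s)
    (hsV : s ≤ Fintype.card V) (hpar : Even s ∨ Odd (Fintype.card V)) :
    ∃ T, H.InducesNoIsolated T ∧ #T = s := by
  by_cases hseven : Even s
  · obtain ⟨m, rfl⟩ := hseven.two_dvd
    have hempty : H.InducesNoIsolated ∅ := fun _ hv => absurd hv (notMem_empty _)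
    simpa using hempty.exists_card_add_two_mul hH m (by simpa using hsV)
  · obtain ⟨m, rfl⟩ := Nat.not_even_iff_odd.1 hseven
    obtain ⟨T, hT, hTcard⟩ := exists_inducesNoIsolated_card_three hH (hpar.resolve_left hseven)
    obtain ⟨T', hT', hT'card⟩ := hT.exists_card_add_two_mul hH (m - 1) (by omega)
    exact ⟨T', hT', by omega⟩

end SimpleGraph

open SimpleGraph

/-- A star `K_{1,r}` inside `S` would cover `S`, so its centre would be adjacent to all of `S`. -/
theorem starG_not_embed_of_compl_inducesNoIsolated {V : Type*} [DecidableEq V] {G : SimpleGraph V}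
    {r : ℕ} {S : Finset V} (hS : Gᶜ.InducesNoIsolated S) (hcard : #S = r + 1)
    (f : Option (Fin r) → V) (hf : Function.Injective f) (hfS : ∀ a, f a ∈ S) :
    ¬ ∀ a b, (starG r).Adj a b → G.Adj (f a) (f b) := by
  intro hadj
  have himage : univ.image f = S :=
    eq_of_subset_of_card_le (by simpa [subset_iff] using hfS)
      (by rw [card_image_of_injective _ hf, card_univ, hcard, Fintype.card_option, Fintype.card_fin])
  obtain ⟨w, hwS, hcentre⟩ := hS (f none) (hfS none)
  obtain ⟨a, -, rfl⟩ := mem_image.1 (himage ▸ hwS)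
  cases a with
  | none => exact hcentre.1 rfl
  | some i => exact hcentre.2 (hadj none (some i) ⟨by simp, Or.inl rfl⟩)

theorem exists_compl_adj_of_ncard_neighborSet_lt {V : Type*} [Fintype V] (G : SimpleGraph V)
    (v : V) (h : (G.neighborSet v).ncard < Fintype.card V - 1) : ∃ w, Gᶜ.Adj v w := by
  classical
  rw [← degree_pos_iff_exists_adj, degree_compl, ← card_neighborSet_eq_degree,
    ← Nat.card_eq_fintype_card (α := G.neighborSet v), Nat.card_coe_set_eq]
  omega

theorem stmt_6 {V : Type*} [Fintype V] (G : SimpleGraph V) (r k : ℕ)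
    (hr : 3 ≤ r) (hcard : Fintype.card V = r + k + 1)
    (hdeg : ∀ v : V, (G.neighborSet v).ncard < r + k)
    (hpar : Odd r ∨ Even k) :
    ¬ VertexStable (starG r) k G := by
  classical
  intro hstab
  have hH : ∀ v, ∃ w, Gᶜ.Adj v w := fun v =>
    exists_compl_adj_of_ncard_neighborSet_lt G v (by have := hdeg v; omega)
  have hpar' : Even (r + 1) ∨ Odd (Fintype.card V) := by
    rw [hcard]
    grind
  obtain ⟨S, hS, hScard⟩ := exists_inducesNoIsolated_card hH (s := r + 1) (by omega) (by omega) hpar'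
  obtain ⟨f, hf, hfS, hadj⟩ := hstab Sᶜ (by rw [card_compl, hScard, hcard]; omega)
  exact starG_not_embed_of_compl_inducesNoIsolated hS hScard f hf (by simpa using hfS) hadj
end

section
/- Let r ≥ 3 and k ≥ 0 with either r odd, or r even and k < (r−1)² − 2. Then every (K_{1,r}; k)-vertex stable graph G of order r+k+1 satisfies |E(G)| ≥ (1/2)(k+1)(2r+k). -/
/-!
Put `H = Gᶜ`. Applying stability to the complement of an `(r+1)`-set `S` gives a star spanning `S`,
whose centre is isolated in `H[S]`: no `(r+1)`-set induces a subgraph of `H` without isolated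
vertices. Conversely, if `2|E(H)| > r(r-1)` such a set exists. Take a maximum matching `M` of `H`.
If `2|M| ≤ r+1`, add to `V(M)` further non-isolated vertices, each adjacent to `V(M)` by
maximality; there are more than `r` non-isolated vertices since `2|E(H)| > r(r-1)`. Otherwise, for
odd `r` take `(r+1)/2` edges of `M`. For even `r`, `H` is not itself a matching, as it would have at
most `(r+k+1)/2` edges; so some `w` outside an edge `e ∈ M` is adjacent to `e`, and `e`, `w` and
`r/2 - 1` further edges of `M` avoiding `w` form the set. Counting edges of `G` and `Gᶜ` together
gives the bound.
-/

open Finset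

namespace SimpleGraph

variable {V : Type*} {H : SimpleGraph V}

section Counting

variable [Fintype V] [DecidableRel H.Adj]

lemma two_mul_card_edgeFinset_le_of_forall_mem [DecidableEq V] {W : Finset V}
    (hW : ∀ v u, H.Adj v u → v ∈ W) : 2 * #H.edgeFinset ≤ #W * (#W - 1) := by
  have hdeg : ∀ v ∈ W, H.degree v ≤ #W - 1 := fun v hv => by
    rw [← card_neighborFinset_eq_degree, ← card_erase_of_mem hv]
    exact card_le_card fun u hu => mem_erase.2
      ⟨((mem_neighborFinset H v u).1 hu).ne', hW u v ((mem_neighborFinset H v u).1 hu).symm⟩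
  calc 2 * #H.edgeFinset = ∑ v ∈ W, H.degree v := by
        rw [← sum_degrees_eq_twice_card_edges]
        refine (sum_subset (subset_univ W) fun v _ hv => ?_).symm
        exact (degree_eq_zero_iff_notMem_support H v).2 fun ⟨u, hvu⟩ => hv (hW v u hvu)
    _ ≤ ∑ _v ∈ W, (#W - 1) := sum_le_sum hdeg
    _ = #W * (#W - 1) := by rw [sum_const, smul_eq_mul]

lemma two_mul_card_edgeFinset_le_card_of_degree_le_one (h : ∀ v, H.degree v ≤ 1) :
    2 * #H.edgeFinset ≤ Fintype.card V := by
  rw [← sum_degrees_eq_twice_card_edges, ← card_univ, card_eq_sum_ones]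
  exact sum_le_sum fun v _ => h v

lemma two_mul_card_edgeFinset_add_compl [DecidableRel Hᶜ.Adj] :
    2 * #H.edgeFinset + 2 * #Hᶜ.edgeFinset = Fintype.card V * (Fintype.card V - 1) := by
  rw [← sum_degrees_eq_twice_card_edges, ← sum_degrees_eq_twice_card_edges, ← sum_add_distrib,
    sum_congr rfl fun v _ => ?_, sum_const, card_univ, smul_eq_mul]
  have := H.degree_lt_card_verts v
  rw [degree_compl]
  omega

end Counting

def NoIsolatedOn (H : SimpleGraph V) (S : Finset V) : Prop :=
  ∀ v ∈ S, ∃ u ∈ S, H.Adj v u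

variable [DecidableEq V]

def pairVerts (p : V × V) : Finset V := {p.1, p.2}

def matchedVerts (M : Finset (V × V)) : Finset V := M.biUnion pairVerts

def IsPairMatching (H : SimpleGraph V) (M : Finset (V × V)) : Prop :=
  (∀ p ∈ M, H.Adj p.1 p.2) ∧ (M : Set (V × V)).PairwiseDisjoint pairVerts

def IsMaximumPairMatching (H : SimpleGraph V) (M : Finset (V × V)) : Prop :=
  H.IsPairMatching M ∧ ∀ N, H.IsPairMatching N → #N ≤ #M

variable {M P : Finset (V × V)}

lemma mem_matchedVerts {v : V} : v ∈ matchedVerts M ↔ ∃ p ∈ M, v ∈ pairVerts p :=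
  mem_biUnion

lemma IsPairMatching.mono (hM : H.IsPairMatching M) (hP : P ⊆ M) : H.IsPairMatching P :=
  ⟨fun p hp => hM.1 p (hP hp), hM.2.subset (coe_subset.2 hP)⟩

lemma IsPairMatching.card_matchedVerts (hM : H.IsPairMatching M) :
    #(matchedVerts M) = 2 * #M := by
  rw [matchedVerts, card_biUnion hM.2,
    sum_const_nat (f := fun p => #(pairVerts p)) fun p hp => card_pair (hM.1 p hp).ne, mul_comm]

lemma IsPairMatching.insert_of_notMem {a b : V} (hM : H.IsPairMatching M) (hab : H.Adj a b)
    (ha : a ∉ matchedVerts M) (hb : b ∉ matchedVerts M) :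
    H.IsPairMatching (insert (a, b) M) := by
  refine ⟨by simpa [hab] using hM.1, ?_⟩
  rw [coe_insert]
  refine hM.2.insert fun q hq _ => ?_
  have hq : pairVerts q ⊆ matchedVerts M := subset_biUnion_of_mem pairVerts hq
  simp only [pairVerts, disjoint_insert_left, disjoint_singleton_left]
  exact ⟨fun h => ha (hq h), fun h => hb (hq h)⟩

lemma exists_isMaximumPairMatching [Fintype V] (H : SimpleGraph V) :
    ∃ M, H.IsMaximumPairMatching M := by
  classical
  obtain ⟨M, hM, hmax⟩ := exists_max_image {M | H.IsPairMatching M} card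
    ⟨∅, by simp [IsPairMatching]⟩
  exact ⟨M, (mem_filter.1 hM).2, fun N hN => hmax N (by simpa using hN)⟩

lemma IsMaximumPairMatching.mem_or_mem (hM : H.IsMaximumPairMatching M) {a b : V}
    (hab : H.Adj a b) : a ∈ matchedVerts M ∨ b ∈ matchedVerts M := by
  by_contra! h
  have hnew : (a, b) ∉ M := fun hp => h.1 (mem_matchedVerts.2 ⟨_, hp, by simp [pairVerts]⟩)
  have := hM.2 _ (hM.1.insert_of_notMem hab h.1 h.2)
  rw [card_insert_of_notMem hnew] at this
  omega

lemma IsPairMatching.exists_subset_disjoint (hM : H.IsPairMatching M) (A : Finset V) {m : ℕ}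
    (hm : m + #A ≤ #M) : ∃ P ⊆ M, #P = m ∧ Disjoint (matchedVerts P) A := by
  classical
  have hmeet : #{p ∈ M | ¬Disjoint (pairVerts p) A} ≤ #A := by
    let f : V × V → V := fun p => if p.1 ∈ A then p.1 else p.2
    have hf : ∀ p ∈ {p ∈ M | ¬Disjoint (pairVerts p) A},
        f p ∈ pairVerts p ∧ f p ∈ A := by
      intro p hp
      obtain ⟨a, hap, haA⟩ := not_disjoint_iff.1 (mem_filter.1 hp).2
      simp only [f, pairVerts, mem_insert, mem_singleton] at hap ⊢
      split_ifs <;> grind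
    refine card_le_card_of_injOn f (fun p hp => (hf p hp).2) fun p hp q hq hpq => ?_
    exact hM.2.elim_finset (mem_filter.1 hp).1 (mem_filter.1 hq).1 _ (hf p hp).1
      (hpq ▸ (hf q hq).1)
  have hfree : m ≤ #{p ∈ M | Disjoint (pairVerts p) A} := by
    have := card_filter_add_card_filter_not (s := M) (fun p => Disjoint (pairVerts p) A)
    omega
  obtain ⟨P, hPfree, hPcard⟩ := exists_subset_card_eq hfree
  exact ⟨P, hPfree.trans (filter_subset _ _), hPcard,
    (disjoint_biUnion_left _ _ _).2 fun p hp => (mem_filter.1 (hPfree hp)).2⟩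

lemma noIsolatedOn_matchedVerts_union (hP : H.IsPairMatching P) {T : Finset V}
    (hT : ∀ t ∈ T, ∃ u ∈ matchedVerts P, H.Adj t u) :
    H.NoIsolatedOn (matchedVerts P ∪ T) := by
  intro v hv
  rcases mem_union.1 hv with hv | hv
  · obtain ⟨p, hp, hvp⟩ := mem_matchedVerts.1 hv
    have hpP : pairVerts p ⊆ matchedVerts P ∪ T :=
      (subset_biUnion_of_mem pairVerts hp).trans subset_union_left
    rcases mem_insert.1 hvp with rfl | hvp
    · exact ⟨p.2, hpP (by simp [pairVerts]), hP.1 p hp⟩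
    · rw [mem_singleton.1 hvp]
      exact ⟨p.1, hpP (by simp [pairVerts]), (hP.1 p hp).symm⟩
  · obtain ⟨u, hu, hvu⟩ := hT v hv
    exact ⟨u, mem_union_left _ hu, hvu⟩

lemma IsMaximumPairMatching.exists_noIsolatedOn_card_eq_of_le
    (hM : H.IsMaximumPairMatching M) (W : Finset V) (hW : ∀ v ∈ W, ∃ u, H.Adj v u)
    {n : ℕ} (hMn : 2 * #M ≤ n) (hnW : n ≤ #W) : ∃ S, #S = n ∧ H.NoIsolatedOn S := by
  have hfree : n - 2 * #M ≤ #(W \ matchedVerts M) := by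
    have := le_card_sdiff (matchedVerts M) W
    rw [hM.1.card_matchedVerts] at this
    omega
  obtain ⟨T, hTW, hTcard⟩ := exists_subset_card_eq hfree
  have hTM : Disjoint (matchedVerts M) T := disjoint_of_subset_right hTW disjoint_sdiff
  refine ⟨matchedVerts M ∪ T, ?_, noIsolatedOn_matchedVerts_union hM.1 fun t ht => ?_⟩
  · rw [card_union_of_disjoint hTM, hM.1.card_matchedVerts]
    omega
  · obtain ⟨htW, htM⟩ := mem_sdiff.1 (hTW ht)
    obtain ⟨u, htu⟩ := hW t htW
    exact ⟨u, (hM.mem_or_mem htu).resolve_left htM, htu⟩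

lemma IsPairMatching.exists_noIsolatedOn_card_eq_two_mul (hM : H.IsPairMatching M) {m : ℕ}
    (hm : m ≤ #M) : ∃ S, #S = 2 * m ∧ H.NoIsolatedOn S := by
  obtain ⟨P, hPM, hPcard⟩ := exists_subset_card_eq hm
  have hP := hM.mono hPM
  refine ⟨matchedVerts P, by rw [hP.card_matchedVerts, hPcard], ?_⟩
  simpa using noIsolatedOn_matchedVerts_union hP (T := ∅) (by simp)

lemma IsMaximumPairMatching.exists_adj_outside (hM : H.IsMaximumPairMatching M) {v x y : V}
    (hx : H.Adj v x) (hy : H.Adj v y) (hxy : x ≠ y) :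
    ∃ p ∈ M, ∃ u ∈ pairVerts p, ∃ w ∉ pairVerts p, H.Adj u w := by
  by_cases hv : v ∈ matchedVerts M
  · obtain ⟨p, hp, hvp⟩ := mem_matchedVerts.1 hv
    by_cases hxp : x ∈ pairVerts p
    · refine ⟨p, hp, v, hvp, y, fun hyp => ?_, hy⟩
      simp only [pairVerts, mem_insert, mem_singleton] at hvp hxp hyp
      grind [hx.ne, hy.ne]
    · exact ⟨p, hp, v, hvp, x, hxp, hx⟩
  · obtain ⟨p, hp, hxp⟩ := mem_matchedVerts.1 ((hM.mem_or_mem hx).resolve_left hv)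
    exact ⟨p, hp, x, hxp, v, fun hvp => hv (mem_matchedVerts.2 ⟨p, hp, hvp⟩), hx.symm⟩

lemma IsMaximumPairMatching.exists_noIsolatedOn_card_eq_two_mul_add_three
    (hM : H.IsMaximumPairMatching M) {v x y : V} (hx : H.Adj v x) (hy : H.Adj v y)
    (hxy : x ≠ y) {m : ℕ} (hm : m + 2 ≤ #M) : ∃ S, #S = 2 * m + 3 ∧ H.NoIsolatedOn S := by
  obtain ⟨p, hp, u, hu, w, hw, huw⟩ := hM.exists_adj_outside hx hy hxy
  obtain ⟨P, hPM, hPcard, hPw⟩ := (hM.1.mono (erase_subset p M)).exists_subset_disjoint {w}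
    (m := m) (by rw [card_erase_of_mem hp, card_singleton]; omega)
  have hpP : p ∉ P := fun h => (mem_erase.1 (hPM h)).1 rfl
  have hQ : H.IsPairMatching (insert p P) :=
    hM.1.mono (insert_subset hp (hPM.trans (erase_subset p M)))
  have hpQ : pairVerts p ⊆ matchedVerts (insert p P) :=
    subset_biUnion_of_mem pairVerts (mem_insert_self p P)
  have hwQ : w ∉ matchedVerts (insert p P) := by
    rw [matchedVerts, biUnion_insert, mem_union, not_or]
    exact ⟨hw, disjoint_singleton_right.1 hPw⟩
  refine ⟨matchedVerts (insert p P) ∪ {w}, ?_, noIsolatedOn_matchedVerts_union hQ ?_⟩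
  · rw [card_union_of_disjoint (disjoint_singleton_right.2 hwQ), hQ.card_matchedVerts,
      card_insert_of_notMem hpP, hPcard, card_singleton]
    ring
  · intro t ht
    rw [mem_singleton.1 ht]
    exact ⟨u, hpQ hu, huw.symm⟩

lemma exists_noIsolatedOn_card_eq [Fintype V] [DecidableRel H.Adj] {r : ℕ}
    (hcase : Odd r ∨ Fintype.card V ≤ r * (r - 1)) (hedges : r * (r - 1) < 2 * #H.edgeFinset) :
    ∃ S, #S = r + 1 ∧ H.NoIsolatedOn S := by
  obtain ⟨M, hM⟩ := H.exists_isMaximumPairMatching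
  by_cases hsmall : 2 * #M ≤ r + 1
  · let W : Finset V := {v | ∃ u, H.Adj v u}
    have hW : 2 * #H.edgeFinset ≤ #W * (#W - 1) :=
      two_mul_card_edgeFinset_le_of_forall_mem fun v u hvu => by simpa [W] using ⟨u, hvu⟩
    have hrW : r + 1 ≤ #W := by
      by_contra! h
      have : #W * (#W - 1) ≤ r * (r - 1) := Nat.mul_le_mul (by omega) (by omega)
      omega
    exact hM.exists_noIsolatedOn_card_eq_of_le W (by simp [W]) hsmall hrW
  rcases r.even_or_odd with ⟨t, rfl⟩ | ⟨m, rfl⟩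
  · have hV := hcase.resolve_left (Nat.not_odd_iff_even.2 ⟨t, rfl⟩)
    obtain ⟨v, hv⟩ : ∃ v, 1 < H.degree v := by
      by_contra! h
      have := two_mul_card_edgeFinset_le_card_of_degree_le_one h
      omega
    obtain ⟨x, hx, y, hy, hxy⟩ := one_lt_card.1 hv
    rw [mem_neighborFinset] at hx hy
    rcases t with _ | m
    · have := H.degree_lt_card_verts v
      simp only [add_zero, zero_mul] at hV
      omega
    obtain ⟨S, hS, hiso⟩ :=
      hM.exists_noIsolatedOn_card_eq_two_mul_add_three hx hy hxy (m := m) (by omega)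
    exact ⟨S, by omega, hiso⟩
  · obtain ⟨S, hS, hiso⟩ := hM.1.exists_noIsolatedOn_card_eq_two_mul (m := m + 1) (by omega)
    exact ⟨S, by omega, hiso⟩

end SimpleGraph

lemma VertexStable.exists_forall_adj_star {V : Type*} [Fintype V] [DecidableEq V]
    {G : SimpleGraph V} {r k : ℕ} (hstab : VertexStable (starG r) k G)
    (hcard : Fintype.card V = r + k + 1) {S : Finset V} (hS : #S = r + 1) :
    ∃ c ∈ S, ∀ u ∈ S, u ≠ c → G.Adj c u := by
  obtain ⟨f, hinj, havoid, hadj⟩ := hstab Sᶜ (by rw [card_compl, hcard, hS]; omega)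
  have hfS : ∀ a, f a ∈ S := fun a => by simpa using havoid a
  have himage : univ.image f = S :=
    eq_of_subset_of_card_le (fun u hu => by obtain ⟨a, -, rfl⟩ := mem_image.1 hu; exact hfS a)
      (by rw [card_image_of_injective _ hinj, hS, card_univ, Fintype.card_option, Fintype.card_fin])
  refine ⟨f none, hfS none, fun u hu hne => ?_⟩
  obtain ⟨a, -, rfl⟩ := mem_image.1 (himage ▸ hu)
  exact hadj none a ⟨fun h => hne (h ▸ rfl), Or.inl rfl⟩

lemma add_add_one_le_mul_sub_one {r k : ℕ} (hk : k < (r - 1) ^ 2 - 2) :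
    r + k + 1 ≤ r * (r - 1) := by
  rcases r with _ | s
  · simp at hk
  · simp only [add_tsub_cancel_right] at hk ⊢
    nlinarith [Nat.sub_add_cancel (show 2 ≤ s ^ 2 by omega)]

lemma mul_two_mul_add_add_mul_sub_one (r k : ℕ) :
    (k + 1) * (2 * r + k) + r * (r - 1) = (r + k + 1) * (r + k + 1 - 1) := by
  rcases r with _ | s
  · simp [mul_comm]
  · simp only [add_tsub_cancel_right]
    ring

theorem stmt_12_general {V : Type*} [Fintype V] (G : SimpleGraph V) (r k : ℕ)
    (hcard : Fintype.card V = r + k + 1)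
    (hcase : Odd r ∨ (Even r ∧ k < (r - 1) ^ 2 - 2))
    (hstab : VertexStable (starG r) k G) :
    (k + 1) * (2 * r + k) ≤ 2 * G.edgeSet.ncard := by
  classical
  have hsize : Odd r ∨ Fintype.card V ≤ r * (r - 1) :=
    hcase.imp_right fun ⟨_, hk⟩ => hcard ▸ add_add_one_le_mul_sub_one hk
  have hcompl : 2 * #Gᶜ.edgeFinset ≤ r * (r - 1) := by
    by_contra! h
    obtain ⟨S, hS, hiso⟩ := Gᶜ.exists_noIsolatedOn_card_eq hsize h
    obtain ⟨c, hc, hadj⟩ := hstab.exists_forall_adj_star hcard hS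
    obtain ⟨u, hu, hcu⟩ := hiso c hc
    exact hcu.2 (hadj u hu hcu.ne')
  have hsum := G.two_mul_card_edgeFinset_add_compl
  rw [hcard, ← mul_two_mul_add_add_mul_sub_one] at hsum
  rw [← G.coe_edgeFinset, Set.ncard_coe_finset]
  omega

theorem stmt_12 {V : Type*} [Fintype V] (G : SimpleGraph V) (r k : ℕ)
    (hr : 3 ≤ r) (hcard : Fintype.card V = r + k + 1)
    (hcase : Odd r ∨ (Even r ∧ k < (r - 1) ^ 2 - 2))
    (hstab : VertexStable (starG r) k G) :
    (k + 1) * (2 * r + k) ≤ 2 * G.edgeSet.ncard :=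
  stmt_12_general G r k hcard hcase hstab
end

section
/- Let r ≥ 3 and k ≥ 0 with either r odd, or r even and k < (r−1)² − 2. If G is a (K_{1,r}; k)-vertex stable graph of order r+k+1 with exactly (1/2)(k+1)(2r+k) edges, then G is isomorphic to the join K_{k+1} * \bar{K}_r. -/
open Finset

namespace SimpleGraph

section

variable {V : Type*} (H : SimpleGraph V)

def NoIsolatedExcept (A W : Finset V) : Prop :=
  ∀ v ∈ W, v ∈ A ∨ ∃ u ∈ W, H.Adj v u

theorem noIsolatedExcept_support [Fintype H.support] {A : Finset V} :
    H.NoIsolatedExcept A H.support.toFinset := fun v hv ↦ by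
  obtain ⟨u, hvu⟩ := H.mem_support.1 (Set.mem_toFinset.1 hv)
  exact .inr ⟨u, Set.mem_toFinset.2 (H.mem_support.2 ⟨v, hvu.symm⟩), hvu⟩

variable {H} [DecidableEq V] {A S : Finset V}

namespace NoIsolatedExcept

theorem erase_or_erase_pair (h : H.NoIsolatedExcept A S) {v : V} (hv : v ∈ S) :
    (∃ w ∈ S, H.NoIsolatedExcept A (S.erase w)) ∨
      ∃ u ∈ S, H.Adj v u ∧ H.NoIsolatedExcept A ((S.erase v).erase u) := by
  by_cases hrem : ∃ w ∈ S, H.NoIsolatedExcept A (S.erase w)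
  · exact .inl hrem
  right
  -- if no vertex can be removed, each `w ∈ S` is the only neighbour of some `x ∈ S \ A`
  have hprivate : ∀ w ∈ S, ∃ x ∈ S, x ∉ A ∧ H.Adj x w ∧ ∀ y ∈ S, H.Adj x y → y = w := by
    intro w hw
    obtain ⟨x, hx, hxA, hxiso⟩ : ∃ x ∈ S.erase w, x ∉ A ∧ ∀ y ∈ S.erase w, ¬H.Adj x y := by
      simpa [NoIsolatedExcept, and_assoc] using fun h' ↦ hrem ⟨w, hw, h'⟩
    obtain ⟨hxw, hxS⟩ := mem_erase.1 hx
    have honly : ∀ y ∈ S, H.Adj x y → y = w := fun y hy hxy ↦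
      by_contra fun hyw ↦ hxiso y (mem_erase.2 ⟨hyw, hy⟩) hxy
    obtain ⟨y, hy, hxy⟩ := (h x hxS).resolve_left hxA
    exact ⟨x, hxS, hxA, honly y hy hxy ▸ hxy, honly⟩
  obtain ⟨u, hu, -, huv, hu_only⟩ := hprivate v hv
  obtain ⟨w, hw, -, hwu, hw_only⟩ := hprivate u hu
  obtain rfl : w = v := hu_only w hw hwu.symm
  refine ⟨u, hu, hwu, fun x hx ↦ ?_⟩
  obtain ⟨hxu, hx⟩ := mem_erase.1 hx
  obtain ⟨hxw, hxS⟩ := mem_erase.1 hx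
  refine (h x hxS).imp_right fun ⟨y, hy, hxy⟩ ↦ ⟨y, ?_, hxy⟩
  have hyw : y ≠ w := fun hyw ↦ hxu (hw_only x hxS (hyw ▸ hxy.symm))
  have hyu : y ≠ u := fun hyu ↦ hxw (hu_only x hxS (hyu ▸ hxy.symm))
  exact mem_erase.2 ⟨hyu, mem_erase.2 ⟨hyw, hy⟩⟩

theorem exists_subset_card_eq_of_even (h : H.NoIsolatedExcept A S) {q : ℕ} (hq : Even q)
    (hqS : q ≤ #S) : ∃ W ⊆ S, #W = q ∧ H.NoIsolatedExcept A W := by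
  induction S using Finset.strongInduction generalizing q with
  | _ S ih =>
  obtain hqS | hqS := hqS.eq_or_lt
  · exact ⟨S, Subset.rfl, hqS.symm, h⟩
  obtain ⟨v, hv⟩ : S.Nonempty := card_pos.1 (by omega)
  obtain ⟨w, hw, hSw⟩ | ⟨u, hu, hvu, hSvu⟩ := h.erase_or_erase_pair hv
  · obtain ⟨W, hWS, hW⟩ := ih _ (erase_ssubset hw) hSw hq (by rw [card_erase_of_mem hw]; omega)
    exact ⟨W, hWS.trans (erase_subset _ _), hW⟩
  obtain rfl | hq2 := Nat.eq_zero_or_pos q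
  · exact ⟨∅, empty_subset _, rfl, fun _ ↦ by simp⟩
  have huv : u ∈ S.erase v := mem_erase.2 ⟨hvu.ne.symm, hu⟩
  have hsub : (S.erase v).erase u ⊂ S := (erase_subset _ _).trans_ssubset (erase_ssubset hv)
  obtain ⟨W, hWS, hW, hWiso⟩ := ih _ hsub hSvu (q := q - 2)
    (by obtain ⟨t, rfl⟩ := hq; exact ⟨t - 1, by omega⟩)
    (by rw [card_erase_of_mem huv, card_erase_of_mem hv]; omega)
  have hvW : v ∉ W := fun h ↦ by simpa using hWS h
  have huW : u ∉ W := fun h ↦ by simpa using hWS h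
  refine ⟨insert v (insert u W), ?_, ?_, ?_⟩
  · exact insert_subset hv (insert_subset hu (hWS.trans hsub.subset))
  · rw [card_insert_of_notMem (by simp [hvu.ne, hvW]), card_insert_of_notMem huW, hW]
    obtain ⟨t, rfl⟩ := hq; omega
  · intro x hx
    simp only [mem_insert] at hx
    obtain rfl | rfl | hx := hx
    · exact .inr ⟨u, by simp, hvu⟩
    · exact .inr ⟨v, by simp, hvu.symm⟩
    · exact (hWiso x hx).imp_right fun ⟨y, hy, hxy⟩ ↦ ⟨y, by simp [hy], hxy⟩

theorem exists_subset_card_eq_of_odd (h : H.NoIsolatedExcept ∅ S) {q : ℕ} (hq : Odd q)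
    (hq3 : 3 ≤ q) (hqS : q ≤ #S) {z a b : V} (hz : z ∈ S) (ha : a ∈ S) (hb : b ∈ S)
    (hab : a ≠ b) (hza : H.Adj z a) (hzb : H.Adj z b) :
    ∃ W ⊆ S, #W = q ∧ H.NoIsolatedExcept ∅ W := by
  classical
  set T : Finset V := {z, a, b}
  have hTS : T ⊆ S := by simp [T, insert_subset_iff, hz, ha, hb]
  have hT : #T = 3 := by
    rw [card_insert_of_notMem (by simp [hza.ne, hzb.ne]), card_pair hab]
  -- vertices with a neighbour on the path `a - z - b` need no partner among the others
  have hrest : H.NoIsolatedExcept {v ∈ S | ∃ t ∈ T, H.Adj v t} (S \ T) := by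
    intro v hv
    obtain ⟨hvS, hvT⟩ := mem_sdiff.1 hv
    obtain ⟨u, hu, hvu⟩ := (h v hvS).resolve_left (notMem_empty v)
    by_cases huT : u ∈ T
    · exact .inl (mem_filter.2 ⟨hvS, u, huT, hvu⟩)
    · exact .inr ⟨u, mem_sdiff.2 ⟨hu, huT⟩, hvu⟩
  obtain ⟨W, hWS, hW, hWiso⟩ := hrest.exists_subset_card_eq_of_even (q := q - 3)
    (Nat.Odd.sub_odd hq (by decide)) (by rw [card_sdiff_of_subset hTS, hT]; omega)
  have hdisj : Disjoint T W := Finset.disjoint_left.2 fun _ hxT hxW ↦ (mem_sdiff.1 (hWS hxW)).2 hxT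
  refine ⟨T ∪ W, union_subset hTS (hWS.trans sdiff_subset), ?_, fun x hx ↦ .inr ?_⟩
  · rw [card_union_of_disjoint hdisj, hT, hW]; omega
  obtain hxT | hxW := mem_union.1 hx
  · simp only [T, mem_insert, mem_singleton] at hxT
    obtain rfl | rfl | rfl := hxT
    · exact ⟨a, by simp [T], hza⟩
    · exact ⟨z, by simp [T], hza.symm⟩
    · exact ⟨z, by simp [T], hzb.symm⟩
  obtain hxA | ⟨y, hy, hxy⟩ := hWiso x hxW
  · obtain ⟨-, t, htT, hxt⟩ := mem_filter.1 hxA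
    exact ⟨t, mem_union_left _ htT, hxt⟩
  · exact ⟨y, mem_union_right _ hy, hxy⟩

end NoIsolatedExcept

end

section

variable {V : Type*} [Fintype V] (G : SimpleGraph V) [DecidableRel G.Adj]

theorem sum_degree_compl_add_sum_degree [DecidableEq V] :
    ∑ v, Gᶜ.degree v + ∑ v, G.degree v = Fintype.card V * (Fintype.card V - 1) := by
  rw [← sum_add_distrib, ← smul_eq_mul, ← card_univ, ← sum_const]
  refine sum_congr rfl fun v _ ↦ ?_
  have := G.degree_lt_card_verts v
  rw [degree_compl, card_univ]
  omega

theorem sum_degree_compl_eq_of_two_mul_ncard_edgeSet [DecidableEq V] {r k : ℕ}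
    (hV : Fintype.card V = r + k + 1) (hE : 2 * G.edgeSet.ncard = (k + 1) * (2 * r + k)) :
    ∑ v, Gᶜ.degree v = r * (r - 1) := by
  have := G.sum_degree_compl_add_sum_degree
  rw [G.sum_degrees_eq_twice_card_edges, edgeFinset, ← Set.ncard_eq_toFinset_card' G.edgeSet,
    hE, hV] at this
  cases r with
  | zero => simpa using this
  | succ s =>
    simp only [Nat.add_sub_cancel] at this ⊢
    nlinarith

theorem exists_adj_adj_of_card_lt_sum_degree (h : Fintype.card V < ∑ v, G.degree v) :
    ∃ z a b, a ≠ b ∧ G.Adj z a ∧ G.Adj z b := by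
  obtain ⟨z, -, hz⟩ : ∃ z ∈ univ, 1 < G.degree z := by
    by_contra! hle
    exact h.not_ge (by simpa using sum_le_sum hle)
  obtain ⟨a, ha, b, hb, hab⟩ := one_lt_card.1 hz
  exact ⟨z, a, b, hab, (mem_neighborFinset ..).1 ha, (mem_neighborFinset ..).1 hb⟩

section

variable [Fintype G.support]

theorem sum_degree_eq_sum_support : ∑ v, G.degree v = ∑ v ∈ G.support.toFinset, G.degree v :=
  (sum_subset (subset_univ _) fun v _ hv ↦
    (G.degree_eq_zero_iff_notMem_support v).2 (by simpa using hv)).symm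

theorem neighborFinset_subset_support_erase [DecidableEq V] (v : V) :
    G.neighborFinset v ⊆ G.support.toFinset.erase v := fun u hu ↦ by
  rw [mem_neighborFinset] at hu
  exact mem_erase.2 ⟨hu.ne.symm, Set.mem_toFinset.2 (G.mem_support.2 ⟨v, hu.symm⟩)⟩

theorem degree_le_card_support_sub_one [DecidableEq V] {v : V}
    (hv : v ∈ G.support.toFinset) :
    G.degree v ≤ #G.support.toFinset - 1 :=
  (card_le_card (G.neighborFinset_subset_support_erase v)).trans_eq (card_erase_of_mem hv)

theorem sum_degree_le_card_support_mul [DecidableEq V] :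
    ∑ v, G.degree v ≤ #G.support.toFinset * (#G.support.toFinset - 1) := by
  rw [sum_degree_eq_sum_support, ← smul_eq_mul, ← sum_const]
  exact sum_le_sum fun v ↦ G.degree_le_card_support_sub_one

theorem isClique_support_of_card_support_mul_le [DecidableEq V]
    (h : #G.support.toFinset * (#G.support.toFinset - 1) ≤ ∑ v, G.degree v) :
    G.IsClique G.support := by
  set S := G.support.toFinset
  have hdeg : ∀ v ∈ S, G.degree v = #S - 1 := by
    refine (sum_eq_sum_iff_of_le fun v ↦ G.degree_le_card_support_sub_one).1 ?_
    rw [sum_const, smul_eq_mul, ← sum_degree_eq_sum_support]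
    exact le_antisymm G.sum_degree_le_card_support_mul h
  intro u hu v hv huv
  rw [← Set.mem_toFinset] at hu hv
  have hnbr : G.neighborFinset u = S.erase u :=
    eq_of_subset_of_card_le (G.neighborFinset_subset_support_erase u)
      (by rw [card_erase_of_mem hu, card_neighborFinset_eq_degree, hdeg u hu])
  have : v ∈ G.neighborFinset u := hnbr ▸ mem_erase.2 ⟨huv.symm, hv⟩
  exact (mem_neighborFinset ..).1 this

end

end

theorem adj_iff_of_isClique_compl_support {V : Type*} {G : SimpleGraph V}
    (h : Gᶜ.IsClique Gᶜ.support) {u v : V} :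
    G.Adj u v ↔ u ≠ v ∧ (u ∉ Gᶜ.support ∨ v ∉ Gᶜ.support) := by
  refine ⟨fun huv ↦ ⟨huv.ne, ?_⟩, fun ⟨hne, hout⟩ ↦ ?_⟩
  · by_contra! hin
    exact (compl_adj G u v).1 (h hin.1 hin.2 huv.ne) |>.2 huv
  · by_contra hnadj
    have hc : Gᶜ.Adj u v := (compl_adj G u v).2 ⟨hne, hnadj⟩
    exact hout.elim (· (Gᶜ.mem_support.2 ⟨v, hc⟩)) (· (Gᶜ.mem_support.2 ⟨u, hc.symm⟩))

end SimpleGraph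

theorem eq_of_le_of_mul_sub_one_le {t r : ℕ} (ht : t ≤ r) (hr : 2 ≤ r)
    (h : r * (r - 1) ≤ t * (t - 1)) : t = r := by
  by_contra hne
  have : t * (t - 1) < r * (r - 1) :=
    Nat.mul_lt_mul_of_lt_of_le (by omega) (Nat.sub_le_sub_right ht 1) (by omega)
  omega

theorem add_add_one_lt_mul_sub_one {r k : ℕ} (hk : k < (r - 1) ^ 2 - 2) :
    r + k + 1 < r * (r - 1) := by
  have hr : 3 ≤ r := by
    by_contra! hr
    interval_cases r <;> simp at hk
  obtain ⟨s, rfl⟩ : ∃ s, r = s + 3 := ⟨r - 3, by omega⟩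
  rw [show s + 3 - 1 = s + 2 by omega] at hk ⊢
  ring_nf at hk ⊢
  omega

open SimpleGraph

theorem VertexStable.exists_forall_adj {V : Type*} [Fintype V] [DecidableEq V]
    {G : SimpleGraph V} {r k : ℕ} (h : VertexStable (starG r) k G)
    (hV : Fintype.card V = r + k + 1) {F : Finset V} (hF : #F = k) :
    ∃ c ∉ F, ∀ v ∉ F, v ≠ c → G.Adj c v := by
  obtain ⟨f, hf, hfF, hadj⟩ := h F hF
  have himage : univ.image f = Fᶜ := by
    refine eq_of_subset_of_card_le (fun x hx ↦ ?_) ?_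
    · obtain ⟨a, -, rfl⟩ := mem_image.1 hx
      exact mem_compl.2 (hfF a)
    · simp [card_image_of_injective _ hf, card_compl, hV, hF]
  refine ⟨f none, hfF none, fun v hv hvc ↦ ?_⟩
  obtain ⟨a, -, rfl⟩ := mem_image.1 (himage ▸ mem_compl.2 hv)
  exact hadj none a ⟨fun h ↦ hvc (h ▸ rfl), .inl rfl⟩

theorem VertexStable.not_noIsolatedExcept_compl {V : Type*} [Fintype V] [DecidableEq V]
    {G : SimpleGraph V} {r k : ℕ} (h : VertexStable (starG r) k G)
    (hV : Fintype.card V = r + k + 1) {W : Finset V} (hW : #W = r + 1) :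
    ¬Gᶜ.NoIsolatedExcept ∅ W := fun hWiso ↦ by
  obtain ⟨c, hc, hcadj⟩ := h.exists_forall_adj hV (F := Wᶜ) (by rw [card_compl, hW, hV]; omega)
  obtain ⟨u, hu, hcu⟩ := (hWiso c (by simpa using hc)).resolve_left (notMem_empty c)
  exact ((compl_adj G c u).1 hcu).2 (hcadj u (by simpa using hu) hcu.ne.symm)

theorem nonempty_iso_joinKE_of_adj_iff {V : Type*} [Fintype V] {G : SimpleGraph V} {k r : ℕ}
    (A : Finset V) (hA : #A = k + 1) (hV : Fintype.card V = r + k + 1)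
    (hadj : ∀ u v, G.Adj u v ↔ u ≠ v ∧ (u ∈ A ∨ v ∈ A)) : Nonempty (G ≃g joinKE k r) := by
  classical
  let e : V ≃ Fin (k + 1) ⊕ Fin r := (Equiv.sumCompl (· ∈ A)).symm.trans <|
    .sumCongr (Fintype.equivFinOfCardEq (by simpa using hA))
      (Fintype.equivFinOfCardEq (by rw [Fintype.card_subtype_compl]; simp [hA, hV]))
  have hleft : ∀ x, (e x).isLeft ↔ x ∈ A := fun x ↦ by
    by_cases hx : x ∈ A <;> simp [e, Equiv.sumCompl, hx]
  refine ⟨⟨e, fun {a b} ↦ ?_⟩⟩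
  change e a ≠ e b ∧ ((e a).isLeft ∨ (e b).isLeft) ↔ G.Adj a b
  rw [hadj, e.injective.ne_iff, hleft, hleft]

theorem stmt_13 {V : Type*} [Fintype V] (G : SimpleGraph V) (r k : ℕ)
    (hr : 3 ≤ r) (hcard : Fintype.card V = r + k + 1)
    (hcase : Odd r ∨ (Even r ∧ k < (r - 1) ^ 2 - 2))
    (hstab : VertexStable (starG r) k G)
    (hsize : 2 * G.edgeSet.ncard = (k + 1) * (2 * r + k)) :
    Nonempty (G ≃g joinKE k r) := by
  classical
  have hsum := G.sum_degree_compl_eq_of_two_mul_ncard_edgeSet hcard hsize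
  set S := Gᶜ.support.toFinset
  have hS : #S ≤ r := by
    by_contra! hS
    obtain ⟨W, -, hW, hWiso⟩ : ∃ W ⊆ S, #W = r + 1 ∧ Gᶜ.NoIsolatedExcept ∅ W := by
      rcases hcase with hodd | ⟨heven, hk⟩
      · exact Gᶜ.noIsolatedExcept_support.exists_subset_card_eq_of_even hodd.add_one hS
      · obtain ⟨z, a, b, hab, hza, hzb⟩ := Gᶜ.exists_adj_adj_of_card_lt_sum_degree <| by
          rw [hsum, hcard]
          exact add_add_one_lt_mul_sub_one hk
        exact Gᶜ.noIsolatedExcept_support.exists_subset_card_eq_of_odd heven.add_one (by omega)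
          hS (Set.mem_toFinset.2 ⟨_, hza⟩) (Set.mem_toFinset.2 ⟨_, hza.symm⟩)
          (Set.mem_toFinset.2 ⟨_, hzb.symm⟩) hab hza hzb
    exact hstab.not_noIsolatedExcept_compl hcard hW hWiso
  have hSr : #S = r :=
    eq_of_le_of_mul_sub_one_le hS (by omega) (hsum ▸ Gᶜ.sum_degree_le_card_support_mul)
  refine nonempty_iso_joinKE_of_adj_iff Sᶜ (by rw [card_compl, hSr, hcard]; omega) hcard
    fun u v ↦ ?_
  simpa [S] using adj_iff_of_isClique_compl_support (Gᶜ.isClique_support_of_card_support_mul_le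
    (hsum ▸ hSr ▸ le_rfl))
end

section
/- Let r ≥ 3 be odd, k ≥ 0, and G a graph of order r+k+1 that is (K_{1,r}; k)-vertex stable. Then G contains a vertex of degree r+k (i.e., a total vertex). -/
namespace SimpleGraph

variable {V : Type*} [Fintype V] (H : SimpleGraph V)

lemma exists_card_add_two_forall_exists_adj (hH : ∀ v, ∃ u, H.Adj v u) (U : Finset V)
    (hU : ∀ v ∈ U, ∃ u ∈ U, H.Adj v u) (hcard : U.card + 2 ≤ Fintype.card V) :
    ∃ U' : Finset V, U'.card = U.card + 2 ∧ ∀ v ∈ U', ∃ u ∈ U', H.Adj v u := by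
  classical
  by_cases hout : ∃ x ∉ U, ∃ y ∉ U, H.Adj x y
  · obtain ⟨x, hx, y, hy, hxy⟩ := hout
    have hxy' : x ∉ insert y U := by simp [hx, hxy.ne]
    refine ⟨insert x (insert y U), by rw [Finset.card_insert_of_notMem hxy',
      Finset.card_insert_of_notMem hy], ?_⟩
    intro v hv
    rcases Finset.mem_insert.1 hv with rfl | hv
    · exact ⟨y, by simp, hxy⟩
    rcases Finset.mem_insert.1 hv with rfl | hv
    · exact ⟨x, by simp, hxy.symm⟩
    obtain ⟨u, hu, huv⟩ := hU v hv
    exact ⟨u, by simp [hu], huv⟩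
  · -- Every vertex outside `U` then has its neighbours in `U`, so any two of them can be added.
    push Not at hout
    have : 1 < Uᶜ.card := by rw [Finset.card_compl]; omega
    obtain ⟨x, hx, y, hy, hxy⟩ := Finset.one_lt_card.1 this
    rw [Finset.mem_compl] at hx hy
    have hxy' : x ∉ insert y U := by simp [hx, hxy]
    refine ⟨insert x (insert y U), by rw [Finset.card_insert_of_notMem hxy',
      Finset.card_insert_of_notMem hy], ?_⟩
    intro v hv
    by_cases hvU : v ∈ U
    · obtain ⟨u, hu, huv⟩ := hU v hvU
      exact ⟨u, by simp [hu], huv⟩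
    · obtain ⟨u, huv⟩ := hH v
      have hu : u ∈ U := by_contra fun hu => hout v hvU u hu huv
      exact ⟨u, by simp [hu], huv⟩

lemma exists_card_eq_forall_exists_adj (hH : ∀ v, ∃ u, H.Adj v u) :
    ∀ m, 2 * m ≤ Fintype.card V →
      ∃ U : Finset V, U.card = 2 * m ∧ ∀ v ∈ U, ∃ u ∈ U, H.Adj v u
  | 0, _ => ⟨∅, rfl, by simp⟩
  | m + 1, hm => by
    obtain ⟨U, hUcard, hU⟩ := exists_card_eq_forall_exists_adj hH m (by omega)
    obtain ⟨U', hU'card, hU'⟩ :=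
      H.exists_card_add_two_forall_exists_adj hH U hU (by omega)
    exact ⟨U', by omega, hU'⟩

variable {H}

lemma ncard_neighborSet_of_forall_not_compl_adj {v : V} (hv : ∀ u, ¬ Hᶜ.Adj v u) :
    (H.neighborSet v).ncard = Fintype.card V - 1 := by
  have : H.neighborSet v = {v}ᶜ := by
    ext u
    simp only [mem_neighborSet, Set.mem_compl_iff, Set.mem_singleton_iff]
    refine ⟨fun h => h.ne.symm, fun hne => ?_⟩
    by_contra hnadj
    exact hv u ((H.compl_adj v u).2 ⟨Ne.symm hne, hnadj⟩)
  rw [this, Set.ncard_compl, Set.ncard_singleton, Nat.card_eq_fintype_card]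

end SimpleGraph

lemma VertexStable.exists_mem_forall_not_compl_adj {V : Type*} [Fintype V] {G : SimpleGraph V}
    {r k : ℕ} (hcard : Fintype.card V = r + k + 1) (hstab : VertexStable (starG r) k G)
    (U : Finset V) (hU : U.card = r + 1) : ∃ c ∈ U, ∀ u ∈ U, ¬ Gᶜ.Adj c u := by
  classical
  obtain ⟨f, hinj, havoid, hadj⟩ := hstab Uᶜ (by rw [Finset.card_compl]; omega)
  have himage : Finset.univ.image f = U := by
    refine Finset.eq_of_subset_of_card_le (fun x hx => ?_) ?_
    · obtain ⟨a, -, rfl⟩ := Finset.mem_image.1 hx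
      simpa using havoid a
    · rw [Finset.card_image_of_injective _ hinj, Finset.card_univ, Fintype.card_option,
        Fintype.card_fin, hU]
  refine ⟨f none, by simpa using havoid none, fun u hu hcompl => ?_⟩
  rw [← himage] at hu
  obtain ⟨a, -, rfl⟩ := Finset.mem_image.1 hu
  cases a with
  | none => exact hcompl.ne rfl
  | some i => exact ((G.compl_adj _ _).1 hcompl).2 (hadj none (some i) ⟨by simp, Or.inl rfl⟩)

theorem stmt_19_general {V : Type*} [Fintype V] (G : SimpleGraph V) (r k : ℕ)
    (hro : Odd r) (hcard : Fintype.card V = r + k + 1)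
    (hstab : VertexStable (starG r) k G) :
    ∃ v : V, (G.neighborSet v).ncard = r + k := by
  by_contra! hno
  have hcompl : ∀ v, ∃ u, Gᶜ.Adj v u := by
    intro v
    by_contra! hv
    exact hno v (by rw [SimpleGraph.ncard_neighborSet_of_forall_not_compl_adj hv, hcard]; omega)
  obtain ⟨j, rfl⟩ := hro
  obtain ⟨U, hUcard, hU⟩ := Gᶜ.exists_card_eq_forall_exists_adj hcompl (j + 1) (by omega)
  obtain ⟨c, hc, hcU⟩ := hstab.exists_mem_forall_not_compl_adj hcard U (by omega)
  obtain ⟨u, hu, hcu⟩ := hU c hc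
  exact hcU u hu hcu

theorem stmt_19 {V : Type*} [Fintype V] (G : SimpleGraph V) (r k : ℕ)
    (hr : 3 ≤ r) (hro : Odd r) (hcard : Fintype.card V = r + k + 1)
    (hstab : VertexStable (starG r) k G) :
    ∃ v : V, (G.neighborSet v).ncard = r + k :=
  stmt_19_general G r k hro hcard hstab
end
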